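/- arXiv:1703.02135 — 4 statements merged into one kernel-verified Lean document; each statement's English description precedes it below -/
import Mathlib

section
/- If V : ℝⁿ → [0,1] is a bounded Borel-measurable function and Q(·|x,u) is a stochastic kernel on ℝⁿ given by a continuous density y ↦ ψ_w(y − Ax − Bu) with ψ_w continuous and bounded, then the map (x, u) ↦ ∫ V(y) ψ_w(y − Ax − Bu) dy is continuous on ℝⁿ × ℝᵐ. -/
/-!
Translations act continuously on `Lᵖ` of a translation-invariant Radon measure for `p < ∞`, and
integration against a fixed `L^q` function (here the bounded `V`, in `L^∞`) is a continuous linear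
functional on `Lᵖ`. Hence `c ↦ ∫ V(y) ψ(y - c) dy` is continuous, and the theorem follows by
composing with the continuous map `(x, u) ↦ Ax + Bu`.
-/

open MeasureTheory Matrix
open scoped ENNReal

section Translation

variable {G : Type*} [AddCommGroup G] [TopologicalSpace G] [IsTopologicalAddGroup G]
  [MeasurableSpace G] [BorelSpace G] {μ : Measure G} [μ.IsAddLeftInvariant]
  [IsLocallyFiniteMeasure μ] [μ.InnerRegularCompactLTTop]
  {p q : ℝ≥0∞} [Fact (1 ≤ p)] [Fact (p ≠ ∞)] [Fact (1 ≤ q)] [q.HolderConjugate p]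

theorem continuous_integral_mul_comp_sub {f g : G → ℝ} (hf : MemLp f p μ) (hg : MemLp g q μ) :
    Continuous fun c => ∫ y, g y * f (y - c) ∂μ := by
  have htranslate : Continuous fun c : G => DomAddAct.mk (-c) +ᵥ hf.toLp f :=
    (DomAddAct.continuous_mk.comp continuous_neg).vadd continuous_const
  refine ((ContinuousLinearMap.lpPairing μ q p (.mul ℝ ℝ) (hg.toLp g)).continuous.comp
    htranslate).congr fun c => ?_
  simp only [Function.comp_apply, ContinuousLinearMap.lpPairing_eq_integral]
  refine integral_congr_ae ?_
  filter_upwards [hg.coeFn_toLp, DomAddAct.vadd_Lp_ae_eq (DomAddAct.mk (-c)) (hf.toLp f),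
    (measurePreserving_add_left μ (-c)).quasiMeasurePreserving.ae_eq hf.coeFn_toLp]
    with y hg_eq hvadd_eq hf_eq
  simp only [Function.comp_apply] at hf_eq
  rw [ContinuousLinearMap.mul_apply', hg_eq, hvadd_eq, Equiv.symm_apply_apply, vadd_eq_add, hf_eq,
    neg_add_eq_sub]

end Translation

theorem integral_value_function_continuous_general
    {n m : ℕ}
    (A : Matrix (Fin n) (Fin n) ℝ) (B : Matrix (Fin n) (Fin m) ℝ)
    (ψ : (Fin n → ℝ) → ℝ)
    (hψ_int : Integrable ψ volume)
    (V : (Fin n → ℝ) → ℝ)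
    (hV_meas : Measurable V)
    (hV_bdd : ∀ y, V y ∈ Set.Icc (0 : ℝ) 1) :
    Continuous (fun p : (Fin n → ℝ) × (Fin m → ℝ) =>
      ∫ y, V y * ψ (y - A.mulVec p.1 - B.mulVec p.2)) := by
  have : Fact ((1 : ℝ≥0∞) ≠ ∞) := ⟨ENNReal.one_ne_top⟩
  have hV : MemLp V ∞ volume := memLp_top_of_bound hV_meas.aestronglyMeasurable 1
    (.of_forall fun y => by rw [Real.norm_eq_abs, abs_of_nonneg (hV_bdd y).1]; exact (hV_bdd y).2)
  have hshift : Continuous fun p : (Fin n → ℝ) × (Fin m → ℝ) => A *ᵥ p.1 + B *ᵥ p.2 := by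
    fun_prop
  simpa only [sub_sub, Function.comp_def] using
    (continuous_integral_mul_comp_sub (memLp_one_iff_integrable.mpr hψ_int) hV).comp hshift

/-- Continuity of `(x,u) ↦ ∫ V(y) ψ_w(y - Ax - Bu) dy` for bounded measurable
`V` with values in `[0,1]` and continuous bounded density `ψ_w`. -/
theorem integral_value_function_continuous
    {n m : ℕ}
    (A : Matrix (Fin n) (Fin n) ℝ) (B : Matrix (Fin n) (Fin m) ℝ)
    (ψ : (Fin n → ℝ) → ℝ)
    (hψ_cont : Continuous ψ)
    (hψ_bdd : ∃ C, ∀ z, ψ z ≤ C)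
    (hψ_nonneg : ∀ z, 0 ≤ ψ z)
    (hψ_int : Integrable ψ volume)
    (hψ_one : ∫ z, ψ z = 1)
    (V : (Fin n → ℝ) → ℝ)
    (hV_meas : Measurable V)
    (hV_bdd : ∀ y, V y ∈ Set.Icc (0 : ℝ) 1) :
    Continuous (fun p : (Fin n → ℝ) × (Fin m → ℝ) =>
      ∫ y, V y * ψ (y - A.mulVec p.1 - B.mulVec p.2)) :=
  integral_value_function_continuous_general A B ψ hψ_int V hV_meas hV_bdd
end

section
/- Under the dynamic programming recursion V_N(x) = 1_𝒯(x) and V_k(x) = sup_{u ∈ 𝒰} 1_𝒮(x) ∫ V_{k+1}(y) ψ_w(y − Ax − Bu) dy for k = N−1, …, 0, with 𝒰 compact, ψ_w continuous and bounded, and 𝒮, 𝒯 Borel sets, every value function V_k is Borel-measurable and takes values in [0,1]. -/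
/-!
Each Bellman step maps Borel functions with values in `[0,1]` to such functions. For fixed `x`
the objective `u ↦ 1_𝒮(x) ∫ W(y) ψ(y - Ax - Bu) dy` is continuous, because translation is
continuous in `L¹` and `W` is bounded; so the supremum over `𝒰` equals the supremum over a
countable dense subset of `𝒰`, a countable supremum of Borel functions of `x`. The claim follows
by backward induction from `V_N = 1_𝒯`.
-/

open MeasureTheory Matrix Set ENNReal

section Translation

variable {G : Type*} [NormedAddCommGroup G] [MeasurableSpace G] [BorelSpace G]
  {μ : Measure G} [μ.IsAddRightInvariant] {W ψ : G → ℝ}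

theorem continuous_integral_mul_comp_sub_right [μ.InnerRegularCompactLTTop]
    [IsLocallyFiniteMeasure μ] (hW : MemLp W ∞ μ) (hψ : Integrable ψ μ) :
    Continuous fun c => ∫ y, W y * ψ (y - c) ∂μ := by
  let T : G → C(G, G) := fun c => ⟨(· - c), by fun_prop⟩
  have hT : Continuous T :=
    ContinuousMap.continuous_of_continuous_uncurry _ (continuous_snd.sub continuous_fst)
  have hTμ : ∀ c, MeasurePreserving (T c) μ μ := measurePreserving_sub_right μ
  refine (((ContinuousLinearMap.mul ℝ ℝ).lpPairing μ ∞ 1 (hW.toLp W)).continuous.comp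
    ((continuous_const (y := hψ.toL1 ψ)).compMeasurePreservingLp hT hTμ one_ne_top)).congr
    fun c => ?_
  rw [Function.comp_apply, ContinuousLinearMap.lpPairing_eq_integral]
  refine integral_congr_ae ?_
  filter_upwards [hW.coeFn_toLp, Lp.coeFn_compMeasurePreserving (hψ.toL1 ψ) (hTμ c),
    (hTμ c).quasiMeasurePreserving.ae_eq_comp hψ.coeFn_toL1] with y hWy hTy hψy
  rw [ContinuousLinearMap.mul_apply', hWy, hTy, hψy]
  rfl

theorem integral_mul_comp_sub_right_mem_Icc (hWm : AEStronglyMeasurable W μ)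
    (hW : ∀ y, W y ∈ Icc (0 : ℝ) 1) (hψ_nonneg : ∀ z, 0 ≤ ψ z) (hψ : Integrable ψ μ)
    (hψ_one : ∫ z, ψ z ∂μ = 1) (c : G) : ∫ y, W y * ψ (y - c) ∂μ ∈ Icc (0 : ℝ) 1 := by
  have hψc : Integrable (fun y => ψ (y - c)) μ := hψ.comp_sub_right c
  have hWψc : Integrable (fun y => W y * ψ (y - c)) μ :=
    hψc.bdd_mul hWm (ae_of_all _ fun y => by rw [Real.norm_of_nonneg (hW y).1]; exact (hW y).2)
  refine ⟨integral_nonneg fun y => mul_nonneg (hW y).1 (hψ_nonneg _), ?_⟩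
  calc ∫ y, W y * ψ (y - c) ∂μ
      ≤ ∫ y, ψ (y - c) ∂μ :=
        integral_mono hWψc hψc fun y => mul_le_of_le_one_left (hψ_nonneg _) (hW y).2
    _ = 1 := by rw [integral_sub_right_eq_self, hψ_one]

end Translation

theorem measurable_biSup_of_continuous {α Y : Type*} [MeasurableSpace α] [TopologicalSpace Y]
    [SecondCountableTopology Y] {g : α → Y → ℝ} (s : Set Y)
    (hg_meas : ∀ u, Measurable fun x => g x u) (hg_cont : ∀ x, Continuous (g x))
    (hg_nonneg : ∀ x u, 0 ≤ g x u) (hg_bdd : ∀ x, BddAbove (range (g x))) :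
    Measurable fun x => ⨆ u ∈ s, g x u := by
  obtain ⟨D, hD_count, hD_dense⟩ := TopologicalSpace.exists_countable_dense s
  have := hD_count.to_subtype
  -- `0 ≤ g` makes the junk value `sSup ∅ = 0` of `⨆ u ∈ s` harmless for `u ∉ s`.
  have hsup : ∀ x, ⨆ u ∈ s, g x u = ⨆ d : D, g x d := fun x => by
    rw [← ciSup_subtype_fun ((hg_bdd x).mono (range_comp_subset_range _ _))
      (by rw [Real.sSup_empty]; exact Real.iSup_nonneg fun u => hg_nonneg x u)]
    exact (hD_dense.ciSup' ((hg_cont x).comp continuous_subtype_val)).symm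
  simp_rw [hsup]
  exact Measurable.iSup fun d => hg_meas d

theorem Set.indicator_one_mem_Icc {α : Type*} (s : Set α) (x : α) :
    s.indicator (fun _ => (1 : ℝ)) x ∈ Icc (0 : ℝ) 1 := by
  by_cases hx : x ∈ s <;> simp [hx]

section ReachAvoid

variable {n m : ℕ} (A : Matrix (Fin n) (Fin n) ℝ) (B : Matrix (Fin n) (Fin m) ℝ)
  (𝒰 : Set (Fin m → ℝ)) (ψ : (Fin n → ℝ) → ℝ) (𝒮 : Set (Fin n → ℝ))

noncomputable def reachAvoidQ (W : (Fin n → ℝ) → ℝ) (x : Fin n → ℝ) (u : Fin m → ℝ) : ℝ :=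
  𝒮.indicator (fun _ => (1 : ℝ)) x * ∫ y, W y * ψ (y - A *ᵥ x - B *ᵥ u)

noncomputable def reachAvoidBellman (W : (Fin n → ℝ) → ℝ) (x : Fin n → ℝ) : ℝ :=
  ⨆ u ∈ 𝒰, reachAvoidQ A B ψ 𝒮 W x u

variable {A B 𝒰 ψ 𝒮} {W : (Fin n → ℝ) → ℝ}

theorem reachAvoidQ_eq (W : (Fin n → ℝ) → ℝ) (x : Fin n → ℝ) (u : Fin m → ℝ) :
    reachAvoidQ A B ψ 𝒮 W x u =
      𝒮.indicator (fun _ => (1 : ℝ)) x * ∫ y, W y * ψ (y - (A *ᵥ x + B *ᵥ u)) := by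
  simp only [reachAvoidQ, sub_sub]

section Bounded

variable (hWm : Measurable W) (hW : ∀ y, W y ∈ Icc (0 : ℝ) 1) (hψ_nonneg : ∀ z, 0 ≤ ψ z)
  (hψ_int : Integrable ψ) (hψ_one : ∫ z, ψ z = 1)
include hWm hW hψ_nonneg hψ_int hψ_one

theorem reachAvoidQ_mem_Icc (x : Fin n → ℝ) (u : Fin m → ℝ) :
    reachAvoidQ A B ψ 𝒮 W x u ∈ Icc (0 : ℝ) 1 := by
  rw [reachAvoidQ_eq]
  exact unitInterval.mul_mem (𝒮.indicator_one_mem_Icc x) (integral_mul_comp_sub_right_mem_Icc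
    hWm.aestronglyMeasurable hW hψ_nonneg hψ_int hψ_one _)

theorem reachAvoidBellman_mem_Icc (x : Fin n → ℝ) :
    reachAvoidBellman A B 𝒰 ψ 𝒮 W x ∈ Icc (0 : ℝ) 1 :=
  have hQ : ∀ u, reachAvoidQ A B ψ 𝒮 W x u ∈ Icc (0 : ℝ) 1 :=
    reachAvoidQ_mem_Icc hWm hW hψ_nonneg hψ_int hψ_one x
  ⟨Real.iSup_nonneg fun u => Real.iSup_nonneg fun _ => (hQ u).1,
    Real.iSup_le (fun u => Real.iSup_le (fun _ => (hQ u).2) zero_le_one) zero_le_one⟩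

theorem measurable_reachAvoidBellman (h𝒮 : MeasurableSet 𝒮) :
    Measurable (reachAvoidBellman A B 𝒰 ψ 𝒮 W) := by
  have hQ : ∀ x u, reachAvoidQ A B ψ 𝒮 W x u ∈ Icc (0 : ℝ) 1 :=
    reachAvoidQ_mem_Icc hWm hW hψ_nonneg hψ_int hψ_one
  have hconv : Continuous fun c => ∫ y, W y * ψ (y - c) :=
    continuous_integral_mul_comp_sub_right (memLp_top_of_bound hWm.aestronglyMeasurable 1
      (ae_of_all _ fun y => by rw [Real.norm_of_nonneg (hW y).1]; exact (hW y).2)) hψ_int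
  refine measurable_biSup_of_continuous 𝒰 (fun u => ?_) (fun x => ?_) (fun x u => (hQ x u).1)
    (fun x => ⟨1, forall_mem_range.2 fun u => (hQ x u).2⟩)
  · simp_rw [reachAvoidQ_eq]
    exact (measurable_const.indicator h𝒮).mul (hconv.comp (by fun_prop)).measurable
  · exact (continuous_const.mul (hconv.comp (by fun_prop))).congr fun u =>
      (reachAvoidQ_eq W x u).symm

end Bounded

end ReachAvoid

theorem reach_avoid_value_functions_measurable_general
    {n m : ℕ} (N : ℕ)
    (A : Matrix (Fin n) (Fin n) ℝ) (B : Matrix (Fin n) (Fin m) ℝ)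
    (𝒰 : Set (Fin m → ℝ))
    (ψ : (Fin n → ℝ) → ℝ)
    (hψ_nonneg : ∀ z, 0 ≤ ψ z) (hψ_int : Integrable ψ volume)
    (hψ_one : ∫ z, ψ z = 1)
    (𝒮 𝒯 : Set (Fin n → ℝ)) (h𝒮 : MeasurableSet 𝒮) (h𝒯 : MeasurableSet 𝒯)
    (V : ℕ → (Fin n → ℝ) → ℝ)
    (hVN : ∀ x, V N x = 𝒯.indicator (fun _ => (1 : ℝ)) x)
    (hVk : ∀ k < N, ∀ x, V k x =
      ⨆ u ∈ 𝒰, 𝒮.indicator (fun _ => (1 : ℝ)) x *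
        ∫ y, V (k + 1) y * ψ (y - A.mulVec x - B.mulVec u)) :
    ∀ k ≤ N, Measurable (V k) ∧ ∀ x, V k x ∈ Set.Icc (0 : ℝ) 1 := by
  intro k hk
  induction hk using Nat.decreasingInduction with
  | self =>
    rw [funext hVN]
    exact ⟨measurable_const.indicator h𝒯, 𝒯.indicator_one_mem_Icc⟩
  | of_succ k hk ih =>
    have hV : V k = reachAvoidBellman A B 𝒰 ψ 𝒮 (V (k + 1)) := funext (hVk k hk)
    rw [hV]
    exact ⟨measurable_reachAvoidBellman ih.1 ih.2 hψ_nonneg hψ_int hψ_one h𝒮,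
      reachAvoidBellman_mem_Icc ih.1 ih.2 hψ_nonneg hψ_int hψ_one⟩

/-- Borel-measurability and `[0,1]`-boundedness of the value functions of the
terminal hitting time reach-avoid dynamic programming recursion. -/
theorem reach_avoid_value_functions_measurable
    {n m : ℕ} (N : ℕ)
    (A : Matrix (Fin n) (Fin n) ℝ) (B : Matrix (Fin n) (Fin m) ℝ)
    (𝒰 : Set (Fin m → ℝ)) (h𝒰c : IsCompact 𝒰) (h𝒰ne : 𝒰.Nonempty)
    (ψ : (Fin n → ℝ) → ℝ)
    (hψ_cont : Continuous ψ) (hψ_bdd : ∃ C, ∀ z, ψ z ≤ C)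
    (hψ_nonneg : ∀ z, 0 ≤ ψ z) (hψ_int : Integrable ψ volume)
    (hψ_one : ∫ z, ψ z = 1)
    (𝒮 𝒯 : Set (Fin n → ℝ)) (h𝒮 : MeasurableSet 𝒮) (h𝒯 : MeasurableSet 𝒯)
    (V : ℕ → (Fin n → ℝ) → ℝ)
    (hVN : ∀ x, V N x = 𝒯.indicator (fun _ => (1 : ℝ)) x)
    (hVk : ∀ k < N, ∀ x, V k x =
      ⨆ u ∈ 𝒰, 𝒮.indicator (fun _ => (1 : ℝ)) x *
        ∫ y, V (k + 1) y * ψ (y - A.mulVec x - B.mulVec u)) :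
    ∀ k ≤ N, Measurable (V k) ∧ ∀ x, V k x ∈ Set.Icc (0 : ℝ) 1 :=
  reach_avoid_value_functions_measurable_general N A B 𝒰 ψ hψ_nonneg hψ_int hψ_one 𝒮 𝒯 h𝒮 h𝒯 V hVN
    hVk
end

section
/- If ψ : ℝ^p × ℝ^q → ℝ≥0 is log-concave jointly in (x, U), and K ⊆ ℝ^p is a convex set, then the function U ↦ ∫_K ψ(x, U) dx is log-concave on ℝ^q (marginal integration over a convex set preserves log-concavity, by the Prékopa–Leindler inequality). -/
open MeasureTheory Set
open scoped ENNReal Pointwise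

/-!
The inequality is the Prékopa–Leindler inequality on `ℝᵖ`, applied to the indicators of `K` times
`ψ(·, U₁)`, `ψ(·, U₂)` and `ψ(·, tU₁ + (1 - t)U₂)`, which satisfy its hypothesis by joint
log-concavity of `ψ` and convexity of `K`.

Prékopa–Leindler tensorizes by Fubini, so it suffices to prove it on `ℝ`. There, after
normalizing `sup f = sup g = 1`, the superlevel sets satisfy
`t • {f > s} + (1 - t) • {g > s} ⊆ {h > s}` for `s < 1`; one-dimensional Brunn–Minkowski
`|A| + |B| ≤ |A + B|` and the layer-cake formula give `t ∫ f + (1 - t) ∫ g ≤ ∫ h`, and AM–GM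
turns this into `(∫ f) ^ t (∫ g) ^ (1 - t) ≤ ∫ h`.
-/

theorem Real.volume_add_volume_le_volume_add_of_isCompact {K L : Set ℝ} (hK : IsCompact K)
    (hL : IsCompact L) (hK₀ : K.Nonempty) (hL₀ : L.Nonempty) :
    volume K + volume L ≤ volume (K + L) := by
  set a := sSup K
  set b := sInf L
  have ha : a ∈ K := hK.sSup_mem hK₀
  have hb : b ∈ L := hL.sInf_mem hL₀
  have hinter : (b +ᵥ K) ∩ (a +ᵥ L) ⊆ {a + b} := by
    rintro _ ⟨⟨x, hx, rfl⟩, ⟨y, hy, hxy⟩⟩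
    have hxa : x ≤ a := le_csSup hK.bddAbove hx
    have hby : b ≤ y := csInf_le hL.bddBelow hy
    simp only [vadd_eq_add, mem_singleton_iff] at hxy ⊢
    linarith
  have hunion : (b +ᵥ K) ∪ (a +ᵥ L) ⊆ K + L := by
    refine union_subset ?_ ?_
    · rintro _ ⟨x, hx, rfl⟩
      show b + x ∈ K + L
      rw [add_comm b x]
      exact add_mem_add hx hb
    · rintro _ ⟨y, hy, rfl⟩
      exact add_mem_add ha hy
  calc volume K + volume L = volume (b +ᵥ K) + volume (a +ᵥ L) := by
        rw [measure_vadd, measure_vadd]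
    _ = volume ((b +ᵥ K) ∪ (a +ᵥ L)) := by
        rw [← measure_union_add_inter _ (hL.measurableSet.const_vadd a),
          measure_mono_null hinter (measure_singleton _), add_zero]
    _ ≤ volume (K + L) := measure_mono hunion

theorem Real.volume_add_volume_le_volume_add {A B : Set ℝ} (hA : MeasurableSet A)
    (hB : MeasurableSet B) (hA₀ : A.Nonempty) (hB₀ : B.Nonempty) :
    volume A + volume B ≤ volume (A + B) := by
  obtain ⟨a, ha⟩ := hA₀
  obtain ⟨b, hb⟩ := hB₀
  rw [hA.measure_eq_iSup_isCompact, hB.measure_eq_iSup_isCompact]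
  simp_rw [iSup_and']
  refine ENNReal.biSup_add_biSup_le' ⟨∅, empty_subset _, isCompact_empty⟩
    ⟨∅, empty_subset _, isCompact_empty⟩ fun K ⟨hKA, hK⟩ L ⟨hLB, hL⟩ => ?_
  calc volume K + volume L ≤ volume (insert a K) + volume (insert b L) :=
        add_le_add (measure_mono (subset_insert _ _)) (measure_mono (subset_insert _ _))
    _ ≤ volume (insert a K + insert b L) :=
        volume_add_volume_le_volume_add_of_isCompact (hK.insert a) (hL.insert b)
          (insert_nonempty _ _) (insert_nonempty _ _)
    _ ≤ volume (A + B) :=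
        measure_mono (add_subset_add (insert_subset ha hKA) (insert_subset hb hLB))

theorem lintegral_eq_lintegral_meas_ofReal_lt {α : Type*} [MeasurableSpace α] {μ : Measure α}
    {φ : α → ℝ≥0∞} (hφ : Measurable φ) (hφ_top : ∀ x, φ x ≠ ∞) :
    ∫⁻ x, φ x ∂μ = ∫⁻ s in Ioi 0, μ {x | ENNReal.ofReal s < φ x} := by
  calc ∫⁻ x, φ x ∂μ = ∫⁻ x, ENNReal.ofReal (φ x).toReal ∂μ := by
        simp_rw [ENNReal.ofReal_toReal (hφ_top _)]
    _ = ∫⁻ s in Ioi 0, μ {x | s < (φ x).toReal} :=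
        lintegral_eq_lintegral_meas_lt μ (ae_of_all _ fun _ => ENNReal.toReal_nonneg)
          hφ.ennreal_toReal.aemeasurable
    _ = ∫⁻ s in Ioi 0, μ {x | ENNReal.ofReal s < φ x} := by
        refine setLIntegral_congr_fun measurableSet_Ioi fun s hs => ?_
        simp_rw [ENNReal.ofReal_lt_iff_lt_toReal (le_of_lt hs) (hφ_top _)]

theorem ENNReal.geom_mean_le_arith_mean2_weighted {t : ℝ} (ht0 : 0 < t) (ht1 : t < 1)
    (a b : ℝ≥0∞) : a ^ t * b ^ (1 - t) ≤ ENNReal.ofReal t * a + ENNReal.ofReal (1 - t) * b := by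
  have h1t : 0 < 1 - t := sub_pos.2 ht1
  have := ENNReal.young_inequality (a ^ t) (b ^ (1 - t))
    (Real.HolderConjugate.inv_inv ht0 h1t (add_sub_cancel t 1))
  rwa [ENNReal.rpow_rpow_inv ht0.ne', ENNReal.rpow_rpow_inv h1t.ne', ENNReal.ofReal_inv_of_pos ht0,
    ENNReal.ofReal_inv_of_pos h1t, div_eq_mul_inv, div_eq_mul_inv, inv_inv, inv_inv, mul_comm a,
    mul_comm b] at this

theorem ENNReal.iSup_mul_iSup_of_monotone {ι : Type*} [Preorder ι] [IsDirectedOrder ι]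
    {f g : ι → ℝ≥0∞} (hf : Monotone f) (hg : Monotone g) :
    (⨆ i, f i) * ⨆ i, g i = ⨆ i, f i * g i := by
  refine le_antisymm ?_ ENNReal.iSup_mul_le
  rw [ENNReal.iSup_mul]
  refine iSup_le fun i => ?_
  rw [ENNReal.mul_iSup]
  refine iSup_le fun j => ?_
  obtain ⟨k, hik, hjk⟩ := exists_ge_ge i j
  exact le_iSup_of_le k (mul_le_mul' (hf hik) (hg hjk))

def PrekopaLeindler {E : Type*} [MeasurableSpace E] [Add E] [SMul ℝ E] (μ : Measure E)
    (t : ℝ) : Prop :=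
  ∀ ⦃f g h : E → ℝ≥0∞⦄, Measurable f → Measurable g → Measurable h →
    (∀ x y, f x ^ t * g y ^ (1 - t) ≤ h (t • x + (1 - t) • y)) →
    (∫⁻ x, f x ∂μ) ^ t * (∫⁻ x, g x ∂μ) ^ (1 - t) ≤ ∫⁻ x, h x ∂μ

namespace Real

variable {t : ℝ}

theorem volume_superlevel_le_of_iSup_eq_one (ht0 : 0 < t) (ht1 : t < 1) {f g h : ℝ → ℝ≥0∞}
    (hf : Measurable f) (hg : Measurable g) (hf₁ : ⨆ x, f x = 1) (hg₁ : ⨆ x, g x = 1)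
    (hle : ∀ x y, f x ^ t * g y ^ (1 - t) ≤ h (t • x + (1 - t) • y)) (s : ℝ) :
    ENNReal.ofReal t * volume {x | ENNReal.ofReal s < f x} +
        ENNReal.ofReal (1 - t) * volume {x | ENNReal.ofReal s < g x} ≤
      volume {x | ENNReal.ofReal s < min (h x) 1} := by
  have h1t : 0 < 1 - t := sub_pos.2 ht1
  set level : (ℝ → ℝ≥0∞) → Set ℝ := fun φ => {x | ENNReal.ofReal s < φ x}
  rcases le_or_gt 1 s with hs1 | hs1
  · have hempty : ∀ φ : ℝ → ℝ≥0∞, ⨆ x, φ x = 1 → {x | ENNReal.ofReal s < φ x} = ∅ := fun φ hφ =>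
      eq_empty_of_forall_notMem fun x hx =>
        (hx.trans_le (hφ ▸ le_iSup φ x)).not_ge (ENNReal.one_le_ofReal.2 hs1)
    simp [hempty f hf₁, hempty g hg₁]
  have hnonempty : ∀ φ : ℝ → ℝ≥0∞, ⨆ x, φ x = 1 → (level φ).Nonempty := fun φ hφ => by
    have hs_lt : ENNReal.ofReal s < ⨆ x, φ x := by rwa [hφ, ENNReal.ofReal_lt_one]
    obtain ⟨x, hx⟩ := lt_iSup_iff.1 hs_lt
    exact ⟨x, hx⟩
  have hsub : t • level f + (1 - t) • level g ⊆ level fun x => min (h x) 1 := by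
    rintro _ ⟨_, ⟨x, hx, rfl⟩, _, ⟨y, hy, rfl⟩, rfl⟩
    refine lt_min ?_ (ENNReal.ofReal_lt_one.2 hs1)
    calc ENNReal.ofReal s = ENNReal.ofReal s ^ t * ENNReal.ofReal s ^ (1 - t) := by
          rw [← ENNReal.rpow_add_of_nonneg _ _ ht0.le h1t.le, add_sub_cancel, ENNReal.rpow_one]
      _ < f x ^ t * g y ^ (1 - t) :=
          ENNReal.mul_lt_mul (ENNReal.rpow_lt_rpow hx ht0) (ENNReal.rpow_lt_rpow hy h1t)
      _ ≤ h (t • x + (1 - t) • y) := hle x y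
  calc ENNReal.ofReal t * volume (level f) + ENNReal.ofReal (1 - t) * volume (level g)
      = volume (t • level f) + volume ((1 - t) • level g) := by
        simp [Measure.addHaar_smul_of_nonneg _ ht0.le, Measure.addHaar_smul_of_nonneg _ h1t.le]
    _ ≤ volume (t • level f + (1 - t) • level g) :=
        volume_add_volume_le_volume_add ((hf measurableSet_Ioi).const_smul₀ t)
          ((hg measurableSet_Ioi).const_smul₀ (1 - t))
          (hnonempty f hf₁).smul_set (hnonempty g hg₁).smul_set
    _ ≤ _ := measure_mono hsub

theorem prekopaLeindler_arith_of_iSup_eq_one (ht0 : 0 < t) (ht1 : t < 1) {f g h : ℝ → ℝ≥0∞}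
    (hf : Measurable f) (hg : Measurable g) (hh : Measurable h)
    (hf₁ : ⨆ x, f x = 1) (hg₁ : ⨆ x, g x = 1)
    (hle : ∀ x y, f x ^ t * g y ^ (1 - t) ≤ h (t • x + (1 - t) • y)) :
    ENNReal.ofReal t * (∫⁻ x, f x) + ENNReal.ofReal (1 - t) * ∫⁻ x, g x ≤ ∫⁻ x, h x := by
  have hne_top : ∀ φ : ℝ → ℝ≥0∞, (∀ x, φ x ≤ 1) → ∀ x, φ x ≠ ∞ := fun φ hφ x =>
    ne_top_of_le_ne_top ENNReal.one_ne_top (hφ x)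
  have hf_le : ∀ x, f x ≤ 1 := fun x => hf₁ ▸ le_iSup f x
  have hg_le : ∀ x, g x ≤ 1 := fun x => hg₁ ▸ le_iSup g x
  have hlevel_meas : ∀ φ : ℝ → ℝ≥0∞, Measurable fun s => volume {x | ENNReal.ofReal s < φ x} :=
    fun φ => Antitone.measurable fun s s' hss' =>
      measure_mono fun x hx => (ENNReal.ofReal_le_ofReal hss').trans_lt hx
  calc ENNReal.ofReal t * (∫⁻ x, f x) + ENNReal.ofReal (1 - t) * ∫⁻ x, g x
      = ∫⁻ s in Ioi 0, (ENNReal.ofReal t * volume {x | ENNReal.ofReal s < f x} +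
          ENNReal.ofReal (1 - t) * volume {x | ENNReal.ofReal s < g x}) := by
        rw [lintegral_eq_lintegral_meas_ofReal_lt hf (hne_top f hf_le),
          lintegral_eq_lintegral_meas_ofReal_lt hg (hne_top g hg_le),
          lintegral_add_left ((hlevel_meas f).const_mul _), lintegral_const_mul _ (hlevel_meas f),
          lintegral_const_mul _ (hlevel_meas g)]
    _ ≤ ∫⁻ s in Ioi 0, volume {x | ENNReal.ofReal s < min (h x) 1} :=
        lintegral_mono (volume_superlevel_le_of_iSup_eq_one ht0 ht1 hf hg hf₁ hg₁ hle)
    _ = ∫⁻ x, min (h x) 1 := (lintegral_eq_lintegral_meas_ofReal_lt (hh.min measurable_const)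
          (hne_top _ fun x => min_le_right _ _)).symm
    _ ≤ ∫⁻ x, h x := lintegral_mono fun x => min_le_left _ _

theorem prekopaLeindler_of_iSup_ne_top (ht0 : 0 < t) (ht1 : t < 1) {f g h : ℝ → ℝ≥0∞}
    (hf : Measurable f) (hg : Measurable g) (hh : Measurable h)
    (hf_top : ⨆ x, f x ≠ ∞) (hg_top : ⨆ x, g x ≠ ∞)
    (hle : ∀ x y, f x ^ t * g y ^ (1 - t) ≤ h (t • x + (1 - t) • y)) :
    (∫⁻ x, f x) ^ t * (∫⁻ x, g x) ^ (1 - t) ≤ ∫⁻ x, h x := by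
  have h1t : 0 < 1 - t := sub_pos.2 ht1
  set M := ⨆ x, f x
  set N := ⨆ x, g x
  rcases eq_or_ne M 0 with hM | hM
  · obtain rfl : f = 0 := funext (ENNReal.iSup_eq_zero.1 hM)
    simp [ENNReal.zero_rpow_of_pos ht0]
  rcases eq_or_ne N 0 with hN | hN
  · obtain rfl : g = 0 := funext (ENNReal.iSup_eq_zero.1 hN)
    simp [ENNReal.zero_rpow_of_pos h1t]
  -- The hypothesis is invariant under `f ↦ M⁻¹ f`, `g ↦ N⁻¹ g`, `h ↦ C⁻¹ h`.
  set C := M ^ t * N ^ (1 - t)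
  have hMt : M ^ t ≠ 0 := (ENNReal.rpow_pos (pos_iff_ne_zero.2 hM) hf_top).ne'
  have hNt : N ^ (1 - t) ≠ 0 := (ENNReal.rpow_pos (pos_iff_ne_zero.2 hN) hg_top).ne'
  have hMt_top : M ^ t ≠ ∞ := ENNReal.rpow_ne_top_of_nonneg ht0.le hf_top
  have hNt_top : N ^ (1 - t) ≠ ∞ := ENNReal.rpow_ne_top_of_nonneg h1t.le hg_top
  have hC : C ≠ 0 := mul_ne_zero hMt hNt
  have hC_top : C ≠ ∞ := ENNReal.mul_ne_top hMt_top hNt_top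
  have hscale : ∀ a b, (M⁻¹ * a) ^ t * (N⁻¹ * b) ^ (1 - t) = C⁻¹ * (a ^ t * b ^ (1 - t)) := by
    intro a b
    rw [ENNReal.mul_rpow_of_nonneg _ _ ht0.le, ENNReal.mul_rpow_of_nonneg _ _ h1t.le,
      ENNReal.inv_rpow, ENNReal.inv_rpow, ENNReal.mul_inv (Or.inl hMt) (Or.inl hMt_top)]
    ring
  have hnormalize : ∀ φ : ℝ → ℝ≥0∞, ⨆ x, φ x ≠ 0 → ⨆ x, φ x ≠ ∞ →
      ⨆ x, (⨆ y, φ y)⁻¹ * φ x = 1 := fun φ h0 h_top => by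
    rw [← ENNReal.mul_iSup, ENNReal.inv_mul_cancel h0 h_top]
  have harith := prekopaLeindler_arith_of_iSup_eq_one ht0 ht1 (hf.const_mul M⁻¹)
    (hg.const_mul N⁻¹) (hh.const_mul C⁻¹) (hnormalize f hM hf_top) (hnormalize g hN hg_top)
    fun x y => by rw [hscale]; exact mul_le_mul' le_rfl (hle x y)
  rw [lintegral_const_mul _ hf, lintegral_const_mul _ hg, lintegral_const_mul _ hh] at harith
  have := (ENNReal.geom_mean_le_arith_mean2_weighted ht0 ht1 _ _).trans harith
  rwa [hscale, ENNReal.mul_le_mul_iff_right (ENNReal.inv_ne_zero.2 hC_top)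
    (ENNReal.inv_ne_top.2 hC)] at this

theorem prekopaLeindler_volume (ht0 : 0 < t) (ht1 : t < 1) :
    PrekopaLeindler (volume : Measure ℝ) t := by
  intro f g h hf hg hh hle
  have h1t : 0 < 1 - t := sub_pos.2 ht1
  -- Truncating at height `n` makes the suprema finite; monotone convergence removes it.
  have htrunc : ∀ n : ℕ,
      (∫⁻ x, min (f x) n) ^ t * (∫⁻ x, min (g x) n) ^ (1 - t) ≤ ∫⁻ x, h x := fun n =>
    prekopaLeindler_of_iSup_ne_top ht0 ht1 (hf.min measurable_const) (hg.min measurable_const) hh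
      (ne_top_of_le_ne_top (ENNReal.natCast_ne_top n) (iSup_le fun _ => min_le_right _ _))
      (ne_top_of_le_ne_top (ENNReal.natCast_ne_top n) (iSup_le fun _ => min_le_right _ _))
      fun x y => (mul_le_mul' (ENNReal.rpow_le_rpow (min_le_left _ _) ht0.le)
        (ENNReal.rpow_le_rpow (min_le_left _ _) h1t.le)).trans (hle x y)
  have hmono : ∀ φ : ℝ → ℝ≥0∞, Monotone fun n : ℕ => ∫⁻ x, min (φ x) n :=
    fun φ n m hnm => lintegral_mono fun x => min_le_min le_rfl (Nat.cast_le.2 hnm)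
  have hlim : ∀ φ : ℝ → ℝ≥0∞, Measurable φ → ∫⁻ x, φ x = ⨆ n : ℕ, ∫⁻ x, min (φ x) n :=
    fun φ hφ => by
      rw [← lintegral_iSup (fun n => hφ.min measurable_const)
        fun n m hnm x => min_le_min le_rfl (Nat.cast_le.2 hnm)]
      simp_rw [← inf_iSup_eq, ENNReal.iSup_natCast, inf_top_eq]
  have hpow : ∀ (u : ℕ → ℝ≥0∞) {s : ℝ}, 0 < s → (⨆ n, u n) ^ s = ⨆ n, u n ^ s :=
    fun u s hs => (ENNReal.orderIsoRpow s hs).map_iSup u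
  rw [hlim f hf, hlim g hg, hpow _ ht0, hpow _ h1t, ENNReal.iSup_mul_iSup_of_monotone
    (fun n m hnm => ENNReal.rpow_le_rpow (hmono f hnm) ht0.le)
    (fun n m hnm => ENNReal.rpow_le_rpow (hmono g hnm) h1t.le)]
  exact iSup_le htrunc

end Real

theorem indicator_ofReal_rpow_mul_rpow_le {E : Type*} [AddCommMonoid E] [Module ℝ E] {t : ℝ}
    (ht0 : 0 < t) (ht1 : t < 1) {K : Set E} (hK : Convex ℝ K) {f g h : E → ℝ}
    (hf0 : ∀ x ∈ K, 0 ≤ f x) (hg0 : ∀ x ∈ K, 0 ≤ g x)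
    (hle : ∀ x ∈ K, ∀ y ∈ K, f x ^ t * g y ^ (1 - t) ≤ h (t • x + (1 - t) • y)) (x y : E) :
    K.indicator (fun x => ENNReal.ofReal (f x)) x ^ t *
        K.indicator (fun x => ENNReal.ofReal (g x)) y ^ (1 - t) ≤
      K.indicator (fun x => ENNReal.ofReal (h x)) (t • x + (1 - t) • y) := by
  have h1t : 0 < 1 - t := sub_pos.2 ht1
  by_cases hx : x ∈ K
  swap
  · simp [hx, ENNReal.zero_rpow_of_pos ht0]
  by_cases hy : y ∈ K
  swap
  · simp [hy, ENNReal.zero_rpow_of_pos h1t]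
  rw [indicator_of_mem hx, indicator_of_mem hy,
    indicator_of_mem (hK hx hy ht0.le h1t.le (add_sub_cancel t 1)),
    ENNReal.ofReal_rpow_of_nonneg (hf0 x hx) ht0.le,
    ENNReal.ofReal_rpow_of_nonneg (hg0 y hy) h1t.le,
    ← ENNReal.ofReal_mul (Real.rpow_nonneg (hf0 x hx) t)]
  exact ENNReal.ofReal_le_ofReal (hle x hx y hy)

namespace PrekopaLeindler

variable {E F : Type*} [MeasurableSpace E] [MeasurableSpace F] {t : ℝ}

theorem dirac [AddCommMonoid E] [Module ℝ E] (a : E) : PrekopaLeindler (Measure.dirac a) t := by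
  intro f g h hf hg hh hle
  simpa [lintegral_dirac' a hf, lintegral_dirac' a hg, lintegral_dirac' a hh,
    Convex.combo_self (add_sub_cancel t 1)] using hle a a

theorem prod [Add E] [SMul ℝ E] [Add F] [SMul ℝ F] {μ : Measure E} {ν : Measure F} [SFinite ν]
    (hμ : PrekopaLeindler μ t) (hν : PrekopaLeindler ν t) : PrekopaLeindler (μ.prod ν) t := by
  intro f g h hf hg hh hle
  rw [lintegral_prod _ hf.aemeasurable, lintegral_prod _ hg.aemeasurable,
    lintegral_prod _ hh.aemeasurable]
  exact hμ hf.lintegral_prod_right' hg.lintegral_prod_right' hh.lintegral_prod_right'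
    fun a b => hν (hf.comp measurable_prodMk_left) (hg.comp measurable_prodMk_left)
      (hh.comp measurable_prodMk_left) fun x y => hle (a, x) (b, y)

theorem map_linearEquiv [AddCommMonoid E] [Module ℝ E] [AddCommMonoid F] [Module ℝ F]
    {μ : Measure E} {ν : Measure F} (hμ : PrekopaLeindler μ t) (e : E ≃ₗ[ℝ] F)
    (he : MeasurePreserving e μ ν) : PrekopaLeindler ν t := by
  intro f g h hf hg hh hle
  rw [← he.lintegral_comp hf, ← he.lintegral_comp hg, ← he.lintegral_comp hh]
  refine hμ (hf.comp he.measurable) (hg.comp he.measurable) (hh.comp he.measurable) fun x y => ?_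
  simpa using hle (e x) (e y)

theorem setIntegral_rpow_mul_rpow_le [AddCommMonoid E] [Module ℝ E] {μ : Measure E}
    (hμ : PrekopaLeindler μ t) (ht0 : 0 < t) (ht1 : t < 1) {K : Set E} (hK : Convex ℝ K)
    (hKm : MeasurableSet K) {f g h : E → ℝ} (hf : Measurable f) (hg : Measurable g)
    (hh : Measurable h) (hf0 : ∀ x ∈ K, 0 ≤ f x) (hg0 : ∀ x ∈ K, 0 ≤ g x)
    (hh0 : ∀ x ∈ K, 0 ≤ h x) (hfi : IntegrableOn f K μ) (hgi : IntegrableOn g K μ)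
    (hhi : IntegrableOn h K μ)
    (hle : ∀ x ∈ K, ∀ y ∈ K, f x ^ t * g y ^ (1 - t) ≤ h (t • x + (1 - t) • y)) :
    (∫ x in K, f x ∂μ) ^ t * (∫ x in K, g x ∂μ) ^ (1 - t) ≤ ∫ x in K, h x ∂μ := by
  have hlift_meas : ∀ φ : E → ℝ, Measurable φ →
      Measurable (K.indicator fun x => ENNReal.ofReal (φ x)) := fun φ hφ =>
    (ENNReal.measurable_ofReal.comp hφ).indicator hKm
  have hlift_integral : ∀ φ : E → ℝ, IntegrableOn φ K μ → (∀ x ∈ K, 0 ≤ φ x) →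
      ∫⁻ x, K.indicator (fun x => ENNReal.ofReal (φ x)) x ∂μ =
        ENNReal.ofReal (∫ x in K, φ x ∂μ) := fun φ hφ hφ0 => by
    rw [lintegral_indicator hKm,
      ofReal_integral_eq_lintegral_ofReal hφ ((ae_restrict_iff' hKm).2 (ae_of_all _ hφ0))]
  have hPL := hμ (hlift_meas f hf) (hlift_meas g hg) (hlift_meas h hh)
    (indicator_ofReal_rpow_mul_rpow_le ht0 ht1 hK hf0 hg0 hle)
  have hfK := setIntegral_nonneg (μ := μ) hKm hf0
  rw [hlift_integral f hfi hf0, hlift_integral g hgi hg0, hlift_integral h hhi hh0,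
    ENNReal.ofReal_rpow_of_nonneg hfK ht0.le,
    ENNReal.ofReal_rpow_of_nonneg (setIntegral_nonneg hKm hg0) (sub_pos.2 ht1).le,
    ← ENNReal.ofReal_mul (Real.rpow_nonneg hfK t)] at hPL
  exact (ENNReal.ofReal_le_ofReal_iff (setIntegral_nonneg hKm hh0)).1 hPL

end PrekopaLeindler

theorem volume_preserving_consLinearEquiv (n : ℕ) :
    MeasurePreserving (Fin.consLinearEquiv ℝ fun _ : Fin (n + 1) => ℝ) volume volume := by
  have h := (volume_preserving_piFinSuccAbove (fun _ : Fin (n + 1) => ℝ) 0).symm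
  have he : ⇑(MeasurableEquiv.piFinSuccAbove (fun _ : Fin (n + 1) => ℝ) 0).symm =
      Fin.consLinearEquiv ℝ fun _ : Fin (n + 1) => ℝ := by
    ext p : 1
    simp [MeasurableEquiv.piFinSuccAbove_symm_apply, Fin.insertNthEquiv, Fin.insertNth_zero']
    rfl
  rwa [he] at h

theorem prekopaLeindler_volume_pi {t : ℝ} (ht0 : 0 < t) (ht1 : t < 1) :
    ∀ n : ℕ, PrekopaLeindler (volume : Measure (Fin n → ℝ)) t
  | 0 => by
    rw [volume_pi, Measure.pi_of_empty]
    exact PrekopaLeindler.dirac _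
  | n + 1 =>
    ((Real.prekopaLeindler_volume ht0 ht1).prod
      (prekopaLeindler_volume_pi ht0 ht1 n)).map_linearEquiv _ (volume_preserving_consLinearEquiv n)

/-- Prékopa's theorem: marginal integration of a jointly log-concave function
over a convex set preserves log-concavity. -/
theorem logConcave_marginal_integral
    {p q : ℕ} (ψ : (Fin p → ℝ) → (Fin q → ℝ) → ℝ)
    (hψ_nonneg : ∀ x U, 0 ≤ ψ x U)
    (hψ_meas : Measurable (fun z : (Fin p → ℝ) × (Fin q → ℝ) => ψ z.1 z.2))
    (hψ_logconcave : ∀ x₁ x₂ : Fin p → ℝ, ∀ U₁ U₂ : Fin q → ℝ,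
      ∀ t : ℝ, 0 ≤ t → t ≤ 1 →
        ψ x₁ U₁ ^ t * ψ x₂ U₂ ^ (1 - t) ≤
          ψ (t • x₁ + (1 - t) • x₂) (t • U₁ + (1 - t) • U₂))
    (K : Set (Fin p → ℝ)) (hK_conv : Convex ℝ K) (hK_meas : MeasurableSet K)
    (hint : ∀ U, IntegrableOn (fun x => ψ x U) K volume) :
    ∀ U₁ U₂ : Fin q → ℝ, ∀ t : ℝ, 0 ≤ t → t ≤ 1 →
      (∫ x in K, ψ x U₁) ^ t * (∫ x in K, ψ x U₂) ^ (1 - t) ≤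
        ∫ x in K, ψ x (t • U₁ + (1 - t) • U₂) := by
  intro U₁ U₂ t ht0 ht1
  rcases ht0.eq_or_lt with rfl | ht0
  · simp
  rcases ht1.eq_or_lt with rfl | ht1
  · simp
  have hslice : ∀ U, Measurable fun x => ψ x U := fun U =>
    hψ_meas.comp (measurable_id.prodMk measurable_const)
  exact (prekopaLeindler_volume_pi ht0 ht1 p).setIntegral_rpow_mul_rpow_le ht0 ht1 hK_conv
    hK_meas (hslice U₁) (hslice U₂) (hslice _) (fun x _ => hψ_nonneg x U₁)
    (fun x _ => hψ_nonneg x U₂) (fun x _ => hψ_nonneg x _) (hint U₁) (hint U₂) (hint _)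
    fun x _ y _ => hψ_logconcave x y U₁ U₂ t ht0.le ht1.le
end

section
/- For a Gaussian disturbance and convex sets 𝒰, 𝒮, 𝒯, the open-loop reach-avoid probability U ↦ ℙ{Ā x_0 + H̄ U + Ḡ W ∈ 𝒮 × ⋯ × 𝒮 × 𝒯} is a log-concave function of U ∈ 𝒰^N; consequently its maximization over the convex set 𝒰^N is a log-concave (quasi-concave) optimization problem. -/
/-!
The reach-avoid event is `W ∈ S U` with `S U = {w | Ā x₀ + H̄ U + Ḡ w ∈ 𝒮^{N-1} × 𝒯}`. Since the
tube is convex, `{(U, w) | w ∈ S U}` is convex, and the Gaussian density `ρ` is log-concave, so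
`(U, w) ↦ 1_{S U}(w) ρ(w)` is log-concave. By the Prékopa–Leindler inequality the marginal
`U ↦ ∫ 1_{S U} ρ`, which is the reach-avoid probability, is again log-concave.

Prékopa–Leindler on `ℝᵈ` follows by induction on `d` with Fubini. On `ℝ`, after truncating `f` and
`g` and scaling them to supremum `1`, the superlevel sets satisfy
`{h > s} ⊇ t • {f > s} + (1 - t) • {g > s}` for `s < 1`; the one-dimensional Brunn–Minkowski
inequality `|A + B| ≥ |A| + |B|` and the layer cake formula give
`∫ h ≥ t ∫ f + (1 - t) ∫ g`, which dominates `(∫ f)ᵗ (∫ g)¹⁻ᵗ`.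
-/

open MeasureTheory Matrix Real
open Set Pointwise
open scoped ENNReal

/-! ### Brunn–Minkowski on the line -/

namespace Real

theorem volume_add_volume_le_volume_add_of_isCompact_s17 {K L : Set ℝ} (hK : IsCompact K)
    (hL : IsCompact L) (hK₀ : K.Nonempty) (hL₀ : L.Nonempty) :
    volume K + volume L ≤ volume (K + L) := by
  -- `sSup K + L` and `K + sInf L` are translates of `L` and `K` inside `K + L` meeting in one point
  set a := sSup K
  set b := sInf L
  have hL' : (a + ·) '' L ⊆ K + L := image_subset_iff.2 fun y hy => add_mem_add (hK.sSup_mem hK₀) hy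
  have hK' : (· + b) '' K ⊆ K + L := image_subset_iff.2 fun x hx => add_mem_add hx (hL.sInf_mem hL₀)
  have hinter : (a + ·) '' L ∩ (· + b) '' K ⊆ {a + b} := by
    rintro _ ⟨⟨y, hy, rfl⟩, x, hx, hxy⟩
    have := csInf_le hL.bddBelow hy
    have := le_csSup hK.bddAbove hx
    simp only [mem_singleton_iff]
    linarith
  calc volume K + volume L = volume ((a + ·) '' L) + volume ((· + b) '' K) := by
        rw [image_add_left, image_add_right, measure_preimage_add, measure_preimage_add_right,
          add_comm]
    _ = volume ((a + ·) '' L ∪ (· + b) '' K) := by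
        rw [← measure_union_add_inter₀ _
          (hK.image (continuous_add_const b)).measurableSet.nullMeasurableSet,
          measure_mono_null hinter (measure_singleton _), add_zero]
    _ ≤ volume (K + L) := measure_mono (union_subset hL' hK')

theorem volume_le_volume_add_left {A B : Set ℝ} (hA : A.Nonempty) :
    volume B ≤ volume (A + B) := by
  obtain ⟨a, ha⟩ := hA
  calc volume B = volume ((a + ·) '' B) := by rw [image_add_left, measure_preimage_add]
    _ ≤ volume (A + B) := measure_mono (image_subset_iff.2 fun y hy => add_mem_add ha hy)

theorem volume_le_volume_add_right {A B : Set ℝ} (hB : B.Nonempty) :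
    volume A ≤ volume (A + B) := by
  rw [add_comm]; exact volume_le_volume_add_left hB

theorem volume_add_volume_le_volume_add_s17 {A B : Set ℝ} (hA : MeasurableSet A)
    (hB : MeasurableSet B) (hA₀ : A.Nonempty) (hB₀ : B.Nonempty) :
    volume A + volume B ≤ volume (A + B) := by
  refine le_of_forall_lt fun c hc => ?_
  rcases eq_or_ne (volume A) 0 with hA0 | hA0
  · rw [hA0, zero_add] at hc; exact hc.trans_le (volume_le_volume_add_left hA₀)
  rcases eq_or_ne (volume B) 0 with hB0 | hB0
  · rw [hB0, add_zero] at hc; exact hc.trans_le (volume_le_volume_add_right hB₀)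
  obtain ⟨a, ha, b, hb, hab⟩ := ENNReal.exists_lt_add_of_lt_add hc hA0 hB0
  obtain ⟨K, hKA, hK, haK⟩ := hA.exists_lt_isCompact ha
  obtain ⟨L, hLB, hL, hbL⟩ := hB.exists_lt_isCompact hb
  calc c < volume K + volume L := hab.trans_le (add_le_add haK.le hbL.le)
    _ ≤ volume (K + L) := volume_add_volume_le_volume_add_of_isCompact_s17 hK hL
        (nonempty_of_measure_ne_zero (ne_bot_of_gt haK))
        (nonempty_of_measure_ne_zero (ne_bot_of_gt hbL))
    _ ≤ volume (A + B) := measure_mono (add_subset_add hKA hLB)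

theorem ofReal_mul_volume_add_ofReal_mul_volume_le {a b : ℝ} (ha : 0 ≤ a) (hb : 0 ≤ b)
    {A B : Set ℝ} (hA : MeasurableSet A) (hB : MeasurableSet B) (hA₀ : A.Nonempty)
    (hB₀ : B.Nonempty) :
    ENNReal.ofReal a * volume A + ENNReal.ofReal b * volume B ≤ volume (a • A + b • B) := by
  simpa [Measure.addHaar_smul_of_nonneg volume ha, Measure.addHaar_smul_of_nonneg volume hb] using
    volume_add_volume_le_volume_add_s17 (hA.const_smul₀ a) (hB.const_smul₀ b) hA₀.smul_set
      hB₀.smul_set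

end Real

theorem ENNReal.rpow_mul_rpow_one_sub_le {t : ℝ} (ht₀ : 0 ≤ t) (ht₁ : t ≤ 1) (x y : ℝ≥0∞) :
    x ^ t * y ^ (1 - t) ≤ ENNReal.ofReal t * x + ENNReal.ofReal (1 - t) * y := by
  rcases eq_or_ne x ⊤ with rfl | hx
  · rcases ht₀.eq_or_lt with rfl | ht₀
    · simp
    · simp [ENNReal.mul_top, ht₀]
  rcases eq_or_ne y ⊤ with rfl | hy
  · rcases ht₁.eq_or_lt with rfl | ht₁
    · simp
    · simp [ENNReal.mul_top, ht₁]
  lift x to NNReal using hx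
  lift y to NNReal using hy
  have h₁t : 0 ≤ 1 - t := sub_nonneg.2 ht₁
  rw [ENNReal.ofReal, ENNReal.ofReal, Real.toNNReal_of_nonneg ht₀, Real.toNNReal_of_nonneg h₁t,
    ← ENNReal.coe_rpow_of_nonneg _ ht₀, ← ENNReal.coe_rpow_of_nonneg _ h₁t]
  exact_mod_cast NNReal.geom_mean_le_arith_mean2_weighted ⟨t, ht₀⟩ ⟨1 - t, h₁t⟩ x y
    (NNReal.eq (add_sub_cancel t 1))

theorem lintegral_eq_setLIntegral_Ioo_measure_lt {α : Type*} [MeasurableSpace α] (μ : Measure α)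
    {f : α → ℝ≥0∞} (hf : Measurable f) (hf₁ : ∀ x, f x ≤ 1) :
    ∫⁻ x, f x ∂μ = ∫⁻ s in Ioo 0 1, μ {x | ENNReal.ofReal s < f x} := by
  have hf' : ∀ x, f x ≠ ⊤ := fun x => ne_top_of_le_ne_top ENNReal.one_ne_top (hf₁ x)
  have hlevel : ∀ s, 0 ≤ s → {x | ENNReal.ofReal s < f x} = {x | s < (f x).toReal} := fun s hs => by
    ext x; simp [ENNReal.ofReal_lt_iff_lt_toReal hs (hf' x)]
  calc ∫⁻ x, f x ∂μ = ∫⁻ x, ENNReal.ofReal (f x).toReal ∂μ := by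
        simp_rw [ENNReal.ofReal_toReal (hf' _)]
    _ = ∫⁻ s in Ioi 0, μ {x | s < (f x).toReal} :=
        lintegral_eq_lintegral_meas_lt μ (ae_of_all _ fun _ => ENNReal.toReal_nonneg)
          hf.ennreal_toReal.aemeasurable
    _ = ∫⁻ s in Ioo 0 1, μ {x | s < (f x).toReal} := by
        rw [← lintegral_indicator measurableSet_Ioi, ← lintegral_indicator measurableSet_Ioo]
        refine lintegral_congr fun s => ?_
        by_cases hs : s < 1
        · simp [indicator, hs]
        · have : {x | s < (f x).toReal} = ∅ := eq_empty_of_forall_notMem fun x hx =>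
            hs (hx.trans_le (ENNReal.toReal_le_of_le_ofReal zero_le_one (by simpa using hf₁ x)))
          simp only [indicator_apply, mem_Ioo, hs, and_false, this, measure_empty, ite_self]
    _ = _ := setLIntegral_congr_fun measurableSet_Ioo fun s hs => by rw [hlevel s hs.1.le]

/-! ### The Prékopa–Leindler inequality -/

def HasPrekopaLeindler {E : Type*} [MeasurableSpace E] [AddCommMonoid E] [Module ℝ E]
    (μ : Measure E) : Prop :=
  ∀ ⦃t : ℝ⦄, 0 < t → t < 1 → ∀ ⦃f g h : E → ℝ≥0∞⦄, Measurable f → Measurable g → Measurable h →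
    (∀ x y, f x ^ t * g y ^ (1 - t) ≤ h (t • x + (1 - t) • y)) →
    (∫⁻ x, f x ∂μ) ^ t * (∫⁻ x, g x ∂μ) ^ (1 - t) ≤ ∫⁻ x, h x ∂μ

theorem Real.ofReal_mul_lintegral_add_le_of_iSup_eq_one {t : ℝ} (ht₀ : 0 < t) (ht₁ : t < 1)
    {f g h : ℝ → ℝ≥0∞} (hf : Measurable f) (hg : Measurable g) (hh : Measurable h)
    (hf₁ : ⨆ x, f x = 1) (hg₁ : ⨆ x, g x = 1)
    (hfgh : ∀ x y, f x ^ t * g y ^ (1 - t) ≤ h (t • x + (1 - t) • y)) :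
    ENNReal.ofReal t * (∫⁻ x, f x) + ENNReal.ofReal (1 - t) * ∫⁻ x, g x ≤ ∫⁻ x, h x := by
  have level : ∀ s ∈ Ioo (0 : ℝ) 1,
      ENNReal.ofReal t * volume {x | ENNReal.ofReal s < f x} +
        ENNReal.ofReal (1 - t) * volume {x | ENNReal.ofReal s < g x} ≤
      volume {z | ENNReal.ofReal s < min (h z) 1} := by
    rintro s ⟨hs₀, hs₁⟩
    have hs : ENNReal.ofReal s < 1 := ENNReal.ofReal_lt_one.2 hs₁
    refine (Real.ofReal_mul_volume_add_ofReal_mul_volume_le ht₀.le (sub_pos.2 ht₁).le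
      (hf measurableSet_Ioi) (hg measurableSet_Ioi) ?_ ?_).trans (measure_mono ?_)
    · exact lt_iSup_iff.1 (hf₁ ▸ hs)
    · exact lt_iSup_iff.1 (hg₁ ▸ hs)
    rintro _ ⟨_, ⟨x, hx, rfl⟩, _, ⟨y, hy, rfl⟩, rfl⟩
    refine lt_min (lt_of_lt_of_le ?_ (hfgh x y)) hs
    calc ENNReal.ofReal s = ENNReal.ofReal s ^ t * ENNReal.ofReal s ^ (1 - t) := by
          rw [← ENNReal.rpow_add_of_nonneg _ _ ht₀.le (sub_pos.2 ht₁).le, add_sub_cancel,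
            ENNReal.rpow_one]
      _ < f x ^ t * g y ^ (1 - t) :=
          ENNReal.mul_lt_mul (ENNReal.rpow_lt_rpow hx ht₀) (ENNReal.rpow_lt_rpow hy (sub_pos.2 ht₁))
  have measurable_tail : ∀ k : ℝ → ℝ≥0∞,
      Measurable fun s : ℝ => volume {x | ENNReal.ofReal s < k x} := fun k =>
    Antitone.measurable fun s s' hss' => measure_mono fun x hx =>
      (ENNReal.ofReal_le_ofReal hss').trans_lt hx
  calc ENNReal.ofReal t * (∫⁻ x, f x) + ENNReal.ofReal (1 - t) * ∫⁻ x, g x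
      = ∫⁻ s in Ioo 0 1, (ENNReal.ofReal t * volume {x | ENNReal.ofReal s < f x} +
          ENNReal.ofReal (1 - t) * volume {x | ENNReal.ofReal s < g x}) := by
        rw [lintegral_eq_setLIntegral_Ioo_measure_lt volume hf fun x => hf₁ ▸ le_iSup f x,
          lintegral_eq_setLIntegral_Ioo_measure_lt volume hg fun x => hg₁ ▸ le_iSup g x,
          lintegral_add_left ((measurable_tail f).const_mul _),
          lintegral_const_mul _ (measurable_tail f),
          lintegral_const_mul _ (measurable_tail g)]
    _ ≤ ∫⁻ s in Ioo 0 1, volume {z | ENNReal.ofReal s < min (h z) 1} :=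
        setLIntegral_mono (measurable_tail _) level
    _ = ∫⁻ z, min (h z) 1 :=
        (lintegral_eq_setLIntegral_Ioo_measure_lt _ (hh.min measurable_const) fun _ =>
          min_le_right _ _).symm
    _ ≤ ∫⁻ z, h z := lintegral_mono fun _ => min_le_left _ _

theorem Real.prekopaLeindler_of_iSup_ne_top_s17 {t : ℝ} (ht₀ : 0 < t) (ht₁ : t < 1)
    {f g h : ℝ → ℝ≥0∞} (hf : Measurable f) (hg : Measurable g) (hh : Measurable h)
    (hf_bdd : ⨆ x, f x ≠ ⊤) (hg_bdd : ⨆ x, g x ≠ ⊤)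
    (hfgh : ∀ x y, f x ^ t * g y ^ (1 - t) ≤ h (t • x + (1 - t) • y)) :
    (∫⁻ x, f x) ^ t * (∫⁻ x, g x) ^ (1 - t) ≤ ∫⁻ x, h x := by
  have ht₁' : 0 < 1 - t := sub_pos.2 ht₁
  set a := ⨆ x, f x
  set b := ⨆ x, g x
  rcases eq_or_ne a 0 with ha | ha
  · simp [ENNReal.iSup_eq_zero.1 ha, ht₀]
  rcases eq_or_ne b 0 with hb | hb
  · simp [ENNReal.iSup_eq_zero.1 hb, ht₁']
  set c := a ^ t * b ^ (1 - t)
  have hat₀ : a ^ t ≠ 0 := (ENNReal.rpow_pos (pos_iff_ne_zero.2 ha) hf_bdd).ne'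
  have hat : a ^ t ≠ ⊤ := ENNReal.rpow_ne_top_of_nonneg ht₀.le hf_bdd
  have hc₀ : c ≠ 0 := mul_ne_zero hat₀ (ENNReal.rpow_pos (pos_iff_ne_zero.2 hb) hg_bdd).ne'
  have hc : c ≠ ⊤ := ENNReal.mul_ne_top hat (ENNReal.rpow_ne_top_of_nonneg ht₁'.le hg_bdd)
  have hfa : ∫⁻ x, f x = a * ∫⁻ x, a⁻¹ * f x := by
    rw [lintegral_const_mul _ hf, ← mul_assoc, ENNReal.mul_inv_cancel ha hf_bdd, one_mul]
  have hgb : ∫⁻ x, g x = b * ∫⁻ x, b⁻¹ * g x := by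
    rw [lintegral_const_mul _ hg, ← mul_assoc, ENNReal.mul_inv_cancel hb hg_bdd, one_mul]
  have normalized := Real.ofReal_mul_lintegral_add_le_of_iSup_eq_one ht₀ ht₁
    (hf.const_mul a⁻¹) (hg.const_mul b⁻¹) (hh.const_mul c⁻¹)
    (by rw [← ENNReal.mul_iSup, ENNReal.inv_mul_cancel ha hf_bdd])
    (by rw [← ENNReal.mul_iSup, ENNReal.inv_mul_cancel hb hg_bdd]) fun x y => by
      rw [ENNReal.mul_rpow_of_nonneg _ _ ht₀.le, ENNReal.mul_rpow_of_nonneg _ _ ht₁'.le,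
        ENNReal.inv_rpow, ENNReal.inv_rpow, mul_mul_mul_comm,
        ← ENNReal.mul_inv (.inl hat₀) (.inl hat)]
      exact mul_le_mul_right (hfgh x y) _
  calc (∫⁻ x, f x) ^ t * (∫⁻ x, g x) ^ (1 - t)
      = c * ((∫⁻ x, a⁻¹ * f x) ^ t * (∫⁻ x, b⁻¹ * g x) ^ (1 - t)) := by
        rw [hfa, hgb, ENNReal.mul_rpow_of_nonneg _ _ ht₀.le,
          ENNReal.mul_rpow_of_nonneg _ _ ht₁'.le, mul_mul_mul_comm]
    _ ≤ c * ∫⁻ x, c⁻¹ * h x := mul_le_mul_right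
        ((ENNReal.rpow_mul_rpow_one_sub_le ht₀.le ht₁.le _ _).trans normalized) _
    _ = ∫⁻ x, h x := by
        rw [lintegral_const_mul _ hh, ← mul_assoc, ENNReal.mul_inv_cancel hc₀ hc, one_mul]

theorem ENNReal.iSup_min_natCast (a : ℝ≥0∞) : ⨆ n : ℕ, min a n = a := by
  rw [← inf_iSup_eq, ENNReal.iSup_natCast]; exact inf_top_eq a

theorem Real.hasPrekopaLeindler_volume : HasPrekopaLeindler (volume : Measure ℝ) := by
  intro t ht₀ ht₁ f g h hf hg hh hfgh
  have truncated (m n : ℕ) :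
      (∫⁻ x, min (f x) m) ^ t * (∫⁻ x, min (g x) n) ^ (1 - t) ≤ ∫⁻ x, h x := by
    refine le_trans ?_ (Real.prekopaLeindler_of_iSup_ne_top_s17 ht₀ ht₁ (hf.min measurable_const)
      (hg.min measurable_const) hh (f := fun x => min (f x) ((max m n : ℕ) : ℝ≥0∞))
      (g := fun x => min (g x) ((max m n : ℕ) : ℝ≥0∞))
      (ne_top_of_le_ne_top (ENNReal.natCast_ne_top _) (iSup_le fun _ => min_le_right _ _))
      (ne_top_of_le_ne_top (ENNReal.natCast_ne_top _) (iSup_le fun _ => min_le_right _ _))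
      fun x y => (mul_le_mul' (ENNReal.rpow_le_rpow (min_le_left _ _) ht₀.le)
        (ENNReal.rpow_le_rpow (min_le_left _ _) (sub_pos.2 ht₁).le)).trans (hfgh x y))
    gcongr <;> exact_mod_cast (by omega : _ ≤ max m n)
  have approx {k : ℝ → ℝ≥0∞} (hk : Measurable k) : ∫⁻ x, k x = ⨆ n : ℕ, ∫⁻ x, min (k x) n := by
    rw [← lintegral_iSup (fun n => hk.min measurable_const)
      fun m n hmn x => min_le_min le_rfl (by exact_mod_cast hmn)]
    simp_rw [ENNReal.iSup_min_natCast]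
  rw [approx hf, approx hg, ← ENNReal.orderIsoRpow_apply t ht₀, OrderIso.map_iSup,
    ← ENNReal.orderIsoRpow_apply (1 - t) (sub_pos.2 ht₁), OrderIso.map_iSup, ENNReal.iSup_mul]
  simp_rw [ENNReal.mul_iSup]
  exact iSup₂_le truncated

namespace HasPrekopaLeindler

variable {E F : Type*} [MeasurableSpace E] [AddCommMonoid E] [Module ℝ E]
  [MeasurableSpace F] [AddCommMonoid F] [Module ℝ F]

theorem of_measurePreserving {μ : Measure E} {ν : Measure F} (hμ : HasPrekopaLeindler μ)
    (e : E →ₗ[ℝ] F) (he : MeasurePreserving e μ ν) : HasPrekopaLeindler ν := by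
  intro t ht₀ ht₁ f g h hf hg hh hfgh
  rw [← he.lintegral_comp hf, ← he.lintegral_comp hg, ← he.lintegral_comp hh]
  exact hμ ht₀ ht₁ (hf.comp he.measurable) (hg.comp he.measurable) (hh.comp he.measurable)
    fun x y => by simpa using hfgh (e x) (e y)

theorem prod {μ : Measure E} {ν : Measure F} [SFinite ν] (hμ : HasPrekopaLeindler μ)
    (hν : HasPrekopaLeindler ν) : HasPrekopaLeindler (μ.prod ν) := by
  intro t ht₀ ht₁ f g h hf hg hh hfgh
  rw [lintegral_prod f hf.aemeasurable, lintegral_prod g hg.aemeasurable,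
    lintegral_prod h hh.aemeasurable]
  refine hμ ht₀ ht₁ hf.lintegral_prod_right' hg.lintegral_prod_right' hh.lintegral_prod_right'
    fun x₁ x₂ => hν ht₀ ht₁ (hf.comp measurable_prodMk_left) (hg.comp measurable_prodMk_left)
      (hh.comp measurable_prodMk_left) fun y₁ y₂ => ?_
  simpa using hfgh (x₁, y₁) (x₂, y₂)

end HasPrekopaLeindler

theorem hasPrekopaLeindler_dirac_zero {E : Type*} [MeasurableSpace E] [AddCommMonoid E]
    [Module ℝ E] : HasPrekopaLeindler (Measure.dirac (0 : E)) := by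
  intro t ht₀ ht₁ f g h hf hg hh hfgh
  simpa [lintegral_dirac' _ hf, lintegral_dirac' _ hg, lintegral_dirac' _ hh] using hfgh 0 0

theorem hasPrekopaLeindler_volume_fin (d : ℕ) :
    HasPrekopaLeindler (volume : Measure (Fin d → ℝ)) := by
  induction d with
  | zero => rw [volume_pi, Measure.pi_of_empty (x := 0)]; exact hasPrekopaLeindler_dirac_zero
  | succ d ih =>
    refine (Real.hasPrekopaLeindler_volume.prod ih).of_measurePreserving
      (Fin.consLinearEquiv ℝ fun _ => ℝ).toLinearMap ?_
    have hcons : ⇑(Fin.consLinearEquiv ℝ fun _ : Fin (d + 1) => ℝ) =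
        (MeasurableEquiv.piFinSuccAbove (fun _ => ℝ) 0).symm := by
      ext x i; simp
    rw [LinearEquiv.coe_coe, hcons, ← Measure.volume_eq_prod]
    exact (volume_preserving_piFinSuccAbove _ 0).symm

theorem hasPrekopaLeindler_volume_pi (ι : Type*) [Fintype ι] :
    HasPrekopaLeindler (volume : Measure (ι → ℝ)) :=
  (hasPrekopaLeindler_volume_fin _).of_measurePreserving
    (LinearEquiv.piCongrLeft ℝ (fun _ => ℝ) (Fintype.equivFin ι).symm).toLinearMap
    (volume_measurePreserving_piCongrLeft (fun _ => ℝ) (Fintype.equivFin ι).symm)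

/-! ### Log-concave functions -/

def LogConcave {E : Type*} [AddCommMonoid E] [Module ℝ E] (f : E → ℝ≥0∞) : Prop :=
  ∀ ⦃t : ℝ⦄, 0 < t → t < 1 → ∀ x y, f x ^ t * f y ^ (1 - t) ≤ f (t • x + (1 - t) • y)

namespace LogConcave

variable {E F : Type*} [AddCommMonoid E] [Module ℝ E] [AddCommMonoid F] [Module ℝ F]
  {f : E → ℝ≥0∞}

theorem const_mul (hf : LogConcave f) (c : ℝ≥0∞) : LogConcave fun x => c * f x := by
  intro t ht₀ ht₁ x y
  calc (c * f x) ^ t * (c * f y) ^ (1 - t) = c ^ (t + (1 - t)) * (f x ^ t * f y ^ (1 - t)) := by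
        rw [ENNReal.mul_rpow_of_nonneg _ _ ht₀.le,
          ENNReal.mul_rpow_of_nonneg _ _ (sub_pos.2 ht₁).le, ENNReal.rpow_add_of_nonneg _ _ ht₀.le (sub_pos.2 ht₁).le, mul_mul_mul_comm]
    _ ≤ c * f (t • x + (1 - t) • y) := by
        rw [add_sub_cancel, ENNReal.rpow_one]; exact mul_le_mul_right (hf ht₀ ht₁ x y) c

theorem comp_linearMap (hf : LogConcave f) (L : F →ₗ[ℝ] E) : LogConcave (f ∘ L) :=
  fun t ht₀ ht₁ x y => by simpa using hf ht₀ ht₁ (L x) (L y)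

theorem indicator (hf : LogConcave f) {s : Set E} (hs : Convex ℝ s) :
    LogConcave (s.indicator f) := by
  intro t ht₀ ht₁ x y
  by_cases hx : x ∈ s
  · by_cases hy : y ∈ s
    · rw [indicator_of_mem hx, indicator_of_mem hy,
        indicator_of_mem (hs hx hy ht₀.le (sub_pos.2 ht₁).le (add_sub_cancel t 1))]
      exact hf ht₀ ht₁ x y
    · simp [indicator_of_notMem hy, ENNReal.zero_rpow_of_pos (sub_pos.2 ht₁)]
  · simp [indicator_of_notMem hx, ENNReal.zero_rpow_of_pos ht₀]

end LogConcave

theorem ConvexOn.logConcave_ofReal_exp_neg {E : Type*} [AddCommMonoid E] [Module ℝ E] {g : E → ℝ}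
    (hg : ConvexOn ℝ univ g) : LogConcave fun x => ENNReal.ofReal (Real.exp (-g x)) := by
  intro t ht₀ ht₁ x y
  rw [ENNReal.ofReal_rpow_of_nonneg (Real.exp_pos _).le ht₀.le,
    ENNReal.ofReal_rpow_of_nonneg (Real.exp_pos _).le (sub_pos.2 ht₁).le,
    ← ENNReal.ofReal_mul (by positivity), ← Real.exp_mul, ← Real.exp_mul, ← Real.exp_add]
  refine ENNReal.ofReal_le_ofReal (Real.exp_le_exp.2 ?_)
  have := hg.2 (mem_univ x) (mem_univ y) ht₀.le (sub_pos.2 ht₁).le (add_sub_cancel t 1)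
  simp only [smul_eq_mul] at this
  linarith

theorem Matrix.PosSemidef.convexOn_dotProduct_mulVec {ι : Type*} [Fintype ι]
    {M : Matrix ι ι ℝ} (hM : M.PosSemidef) : ConvexOn ℝ univ fun x : ι → ℝ => x ⬝ᵥ M *ᵥ x := by
  refine ⟨convex_univ, fun x _ y _ a b ha hb hab => ?_⟩
  have hsymm : y ⬝ᵥ M *ᵥ x = x ⬝ᵥ M *ᵥ y := by
    rw [dotProduct_mulVec, dotProduct_comm, ← mulVec_transpose,
      ← conjTranspose_eq_transpose_of_trivial, hM.1.eq]
  have hxy : 0 ≤ (x - y) ⬝ᵥ M *ᵥ (x - y) := by simpa using hM.dotProduct_mulVec_nonneg (x - y)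
  have key : a • (x ⬝ᵥ M *ᵥ x) + b • (y ⬝ᵥ M *ᵥ y) - (a • x + b • y) ⬝ᵥ M *ᵥ (a • x + b • y) =
      a * b * ((x - y) ⬝ᵥ M *ᵥ (x - y)) := by
    obtain rfl : b = 1 - a := by linarith
    simp only [mulVec_add, mulVec_sub, mulVec_smul, dotProduct_add, dotProduct_sub, add_dotProduct,
      sub_dotProduct, dotProduct_smul, smul_dotProduct, smul_eq_mul, hsymm]
    ring
  nlinarith [mul_nonneg (mul_nonneg ha hb) hxy]

theorem Matrix.PosSemidef.logConcave_ofReal_mul_exp_neg_quadForm {ι : Type*} [Fintype ι]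
    {M : Matrix ι ι ℝ} (hM : M.PosSemidef) (m : ι → ℝ) {c : ℝ} (hc : 0 ≤ c) :
    LogConcave fun z : ι → ℝ => ENNReal.ofReal (c * Real.exp (-((z - m) ⬝ᵥ M *ᵥ (z - m)) / 2)) := by
  have hq : ConvexOn ℝ univ fun z : ι → ℝ => (z - m) ⬝ᵥ M *ᵥ (z - m) / 2 := by
    simpa [sub_eq_neg_add, Function.comp_def, div_eq_inv_mul] using
      (hM.convexOn_dotProduct_mulVec.translate_right (-m)).smul (by norm_num : (0 : ℝ) ≤ 2⁻¹)
  simpa only [neg_div, ENNReal.ofReal_mul hc] using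
    hq.logConcave_ofReal_exp_neg.const_mul (ENNReal.ofReal c)

theorem HasPrekopaLeindler.logConcave_lintegral {E F : Type*} [MeasurableSpace E] [AddCommMonoid E]
    [Module ℝ E] [AddCommMonoid F] [Module ℝ F] {μ : Measure E} (hμ : HasPrekopaLeindler μ)
    {φ : F × E → ℝ≥0∞} (hφm : ∀ u, Measurable fun x => φ (u, x)) (hφ : LogConcave φ) :
    LogConcave fun u => ∫⁻ x, φ (u, x) ∂μ :=
  fun t ht₀ ht₁ u v => hμ ht₀ ht₁ (hφm u) (hφm v) (hφm _) fun x y => by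
    simpa using hφ ht₀ ht₁ (u, x) (v, y)

/-! ### The reach-avoid probability -/

theorem measure_preimage_eq_lintegral_indicator {Ω E : Type*} [MeasurableSpace Ω]
    [MeasurableSpace E] {μ : Measure Ω} {ν : Measure E} {W : Ω → E} (hW : Measurable W)
    {ρ : E → ℝ≥0∞} (hWρ : μ.map W = ν.withDensity ρ) {s : Set E} (hs : MeasurableSet s) :
    μ (W ⁻¹' s) = ∫⁻ x, s.indicator ρ x ∂ν := by
  rw [← Measure.map_apply hW hs, hWρ, withDensity_apply _ hs, lintegral_indicator hs]

theorem convex_setOf_forall_curry_mem {κ ι : Type*} {A : κ → Set (ι → ℝ)}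
    (hA : ∀ k, Convex ℝ (A k)) : Convex ℝ {X : κ × ι → ℝ | ∀ k, (fun i => X (k, i)) ∈ A k} :=
  fun _ hX _ hY _ _ ha hb hab k => hA k (hX k) (hY k) ha hb hab

theorem measurableSet_setOf_forall_curry_mem {κ ι : Type*} [Countable κ] {A : κ → Set (ι → ℝ)}
    (hA : ∀ k, MeasurableSet (A k)) :
    MeasurableSet {X : κ × ι → ℝ | ∀ k, (fun i => X (k, i)) ∈ A k} := by
  rw [ofPred_forall]
  exact .iInter fun k => (hA k).preimage (by fun_prop)

theorem logConcave_measure_add_mulVec_add_mulVec_mem {Ω κ ι ι' : Type*} [MeasurableSpace Ω]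
    [Fintype ι] [Fintype ι'] {μ : Measure Ω} {W : Ω → ι → ℝ} (hW : Measurable W)
    {ρ : (ι → ℝ) → ℝ≥0∞} (hWρ : μ.map W = volume.withDensity ρ) (hρ : LogConcave ρ)
    (hρm : Measurable ρ) {C : Set (κ → ℝ)} (hC : Convex ℝ C)
    (hCm : MeasurableSet C) (a : κ → ℝ) (H : Matrix κ ι' ℝ) (G : Matrix κ ι ℝ) :
    LogConcave fun U => μ {ω | a + H *ᵥ U + G *ᵥ W ω ∈ C} := by
  set K := {p : (ι' → ℝ) × (ι → ℝ) | a + H *ᵥ p.1 + G *ᵥ p.2 ∈ C}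
  have hK : Convex ℝ K := by
    have hK' : K = H.mulVecLin.coprod G.mulVecLin ⁻¹' ((a + ·) ⁻¹' C) := by
      ext p; simp [K, add_assoc]
    exact hK' ▸ (hC.translate_preimage_right _).linear_preimage _
  have hKm : MeasurableSet K :=
    hCm.preimage (measurable_pi_lambda _ fun _ => Continuous.measurable (by fun_prop))
  have hprob (U : ι' → ℝ) :
      μ {ω | a + H *ᵥ U + G *ᵥ W ω ∈ C} = ∫⁻ w, K.indicator (ρ ∘ Prod.snd) (U, w) := by
    simp_rw [← indicator_comp_right]
    exact measure_preimage_eq_lintegral_indicator hW hWρ (hKm.preimage measurable_prodMk_left)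
  have hφ : LogConcave (K.indicator (ρ ∘ Prod.snd)) :=
    (hρ.comp_linearMap (LinearMap.snd ℝ (ι' → ℝ) (ι → ℝ))).indicator hK
  simp_rw [hprob]
  exact (hasPrekopaLeindler_volume_pi ι).logConcave_lintegral
    (fun U => ((hρm.comp measurable_snd).indicator hKm).comp measurable_prodMk_left) hφ

theorem open_loop_reach_avoid_prob_logconcave_general
    {Ω : Type*} {mΩ : MeasurableSpace Ω} {μ : Measure Ω} [IsProbabilityMeasure μ]
    {n m N : ℕ}
    (Abar : Matrix (Fin N × Fin n) (Fin n) ℝ)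
    (Hbar : Matrix (Fin N × Fin n) (Fin N × Fin m) ℝ)
    (Gbar : Matrix (Fin N × Fin n) (Fin N × Fin n) ℝ)
    (x₀ : Fin n → ℝ)
    (W : Ω → (Fin N × Fin n → ℝ)) (hW : Measurable W)
    (mW : Fin N × Fin n → ℝ) (SW : Matrix (Fin N × Fin n) (Fin N × Fin n) ℝ)
    (hSW : SW.PosDef)
    -- W is Gaussian: its law has the nondegenerate Gaussian density N(mW, SW)
    (hWgauss : Measure.map W μ = volume.withDensity (fun z =>
      ENNReal.ofReal ((2 * π) ^ (-((N * n : ℕ) : ℝ) / 2) * SW.det ^ (-(1 : ℝ) / 2) *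
        Real.exp (-((z - mW) ⬝ᵥ SW⁻¹.mulVec (z - mW)) / 2))))
    (𝒮 𝒯 : Set (Fin n → ℝ)) (h𝒮conv : Convex ℝ 𝒮) (h𝒯conv : Convex ℝ 𝒯)
    (h𝒮meas : MeasurableSet 𝒮) (h𝒯meas : MeasurableSet 𝒯)
    (𝒰 : Set (Fin m → ℝ))
    -- the reach-avoid tube 𝒮 × ⋯ × 𝒮 × 𝒯 and the probability as a function of U
    (C : Set (Fin N × Fin n → ℝ))
    (hC : C = {X | ∀ k : Fin N,
      (fun i => X (k, i)) ∈ (if (k : ℕ) = N - 1 then 𝒯 else 𝒮)})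
    (F : (Fin N × Fin m → ℝ) → ℝ)
    (hF : ∀ U, F U =
      (μ {ω | Abar.mulVec x₀ + Hbar.mulVec U + Gbar.mulVec (W ω) ∈ C}).toReal) :
    ∀ U₁ U₂ : Fin N × Fin m → ℝ,
      (∀ k, (fun i => U₁ (k, i)) ∈ 𝒰) → (∀ k, (fun i => U₂ (k, i)) ∈ 𝒰) →
      ∀ t : ℝ, 0 ≤ t → t ≤ 1 →
        F U₁ ^ t * F U₂ ^ (1 - t) ≤ F (t • U₁ + (1 - t) • U₂) := by
  intro U₁ U₂ _ _ t ht₀ ht₁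
  rcases ht₀.eq_or_lt with rfl | ht₀
  · simp
  rcases ht₁.eq_or_lt with rfl | ht₁
  · simp
  have h𝒮𝒯 (k : Fin N) : Convex ℝ (if (k : ℕ) = N - 1 then 𝒯 else 𝒮) ∧
      MeasurableSet (if (k : ℕ) = N - 1 then 𝒯 else 𝒮) := by
    split_ifs
    exacts [⟨h𝒯conv, h𝒯meas⟩, ⟨h𝒮conv, h𝒮meas⟩]
  have hlogConcave := logConcave_measure_add_mulVec_add_mulVec_mem hW hWgauss
    (hSW.posSemidef.inv.logConcave_ofReal_mul_exp_neg_quadForm mW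
      (mul_nonneg (Real.rpow_nonneg (by positivity) _) (Real.rpow_nonneg hSW.det_pos.le _)))
    (by fun_prop)
    (hC ▸ convex_setOf_forall_curry_mem fun k => (h𝒮𝒯 k).1)
    (hC ▸ measurableSet_setOf_forall_curry_mem fun k => (h𝒮𝒯 k).2) (Abar *ᵥ x₀) Hbar Gbar
    ht₀ ht₁ U₁ U₂
  rw [hF, hF, hF, ENNReal.toReal_rpow, ENNReal.toReal_rpow, ← ENNReal.toReal_mul]
  exact ENNReal.toReal_mono (measure_ne_top μ _) hlogConcave

/-- For a Gaussian disturbance and convex sets `𝒰, 𝒮, 𝒯`, the open-loop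
reach-avoid probability `U ↦ ℙ{Ā x₀ + H̄ U + Ḡ W ∈ 𝒮 × ⋯ × 𝒮 × 𝒯}` is a
log-concave function of `U` over the convex set `𝒰^N`. -/
theorem open_loop_reach_avoid_prob_logconcave
    {Ω : Type*} {mΩ : MeasurableSpace Ω} {μ : Measure Ω} [IsProbabilityMeasure μ]
    {n m N : ℕ}
    (Abar : Matrix (Fin N × Fin n) (Fin n) ℝ)
    (Hbar : Matrix (Fin N × Fin n) (Fin N × Fin m) ℝ)
    (Gbar : Matrix (Fin N × Fin n) (Fin N × Fin n) ℝ)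
    (x₀ : Fin n → ℝ)
    (W : Ω → (Fin N × Fin n → ℝ)) (hW : Measurable W)
    (mW : Fin N × Fin n → ℝ) (SW : Matrix (Fin N × Fin n) (Fin N × Fin n) ℝ)
    (hSW : SW.PosDef)
    -- W is Gaussian: its law has the nondegenerate Gaussian density N(mW, SW)
    (hWgauss : Measure.map W μ = volume.withDensity (fun z =>
      ENNReal.ofReal ((2 * π) ^ (-((N * n : ℕ) : ℝ) / 2) * SW.det ^ (-(1 : ℝ) / 2) *
        Real.exp (-((z - mW) ⬝ᵥ SW⁻¹.mulVec (z - mW)) / 2))))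
    (𝒮 𝒯 : Set (Fin n → ℝ)) (h𝒮conv : Convex ℝ 𝒮) (h𝒯conv : Convex ℝ 𝒯)
    (h𝒮meas : MeasurableSet 𝒮) (h𝒯meas : MeasurableSet 𝒯)
    (𝒰 : Set (Fin m → ℝ)) (h𝒰conv : Convex ℝ 𝒰) (h𝒰comp : IsCompact 𝒰)
    -- the reach-avoid tube 𝒮 × ⋯ × 𝒮 × 𝒯 and the probability as a function of U
    (C : Set (Fin N × Fin n → ℝ))
    (hC : C = {X | ∀ k : Fin N,
      (fun i => X (k, i)) ∈ (if (k : ℕ) = N - 1 then 𝒯 else 𝒮)})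
    (F : (Fin N × Fin m → ℝ) → ℝ)
    (hF : ∀ U, F U =
      (μ {ω | Abar.mulVec x₀ + Hbar.mulVec U + Gbar.mulVec (W ω) ∈ C}).toReal) :
    ∀ U₁ U₂ : Fin N × Fin m → ℝ,
      (∀ k, (fun i => U₁ (k, i)) ∈ 𝒰) → (∀ k, (fun i => U₂ (k, i)) ∈ 𝒰) →
      ∀ t : ℝ, 0 ≤ t → t ≤ 1 →
        F U₁ ^ t * F U₂ ^ (1 - t) ≤ F (t • U₁ + (1 - t) • U₂) :=
  open_loop_reach_avoid_prob_logconcave_general (mΩ := mΩ) Abar Hbar Gbar x₀ W hW mW SW hSW hWgauss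
    𝒮 𝒯 h𝒮conv h𝒯conv h𝒮meas h𝒯meas 𝒰 C hC F hF
end
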